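/- arXiv:1706.07741 — 6 statements merged into one kernel-verified Lean document; each statement's English description precedes it below -/
import Mathlib

section
/- Let C₁,S₁,C₂,S₂,C₃,S₃,C₄,S₄ be real numbers satisfying the quadrant sign conditions C₁ > 0, S₁ > 0 (first quadrant), C₂ < 0, S₂ > 0 (second quadrant), C₃ < 0, S₃ < 0 (third quadrant), and C₄ > 0, S₄ < 0 (fourth quadrant). Then the denominator D = (C₃S₂−C₂S₃)(C₁²S₄−C₄²S₁) − (C₁S₄−C₄S₁)(C₃²S₂−C₂²S₃) is strictly positive, and the coefficients a₁ = 2S₄(C₃S₂−C₂S₃)/D, a₂ = 2S₃(C₁S₄−C₄S₁)/D, a₃ = −2S₂(C₁S₄−C₄S₁)/D, a₄ = −2S₁(C₃S₂−C₂S₃)/D are all strictly positive; hence the generalised finite difference scheme is monotone. -/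
/-- Under the quadrant sign conditions, the denominator `D` is
strictly positive and all the generalised finite difference coefficients are
strictly positive, hence the scheme is monotone. -/
theorem gfd_coefficients_positive
    (C₁ S₁ C₂ S₂ C₃ S₃ C₄ S₄ D a₁ a₂ a₃ a₄ : ℝ)
    (h₁C : 0 < C₁) (h₁S : 0 < S₁)
    (h₂C : C₂ < 0) (h₂S : 0 < S₂)
    (h₃C : C₃ < 0) (h₃S : S₃ < 0)
    (h₄C : 0 < C₄) (h₄S : S₄ < 0)
    (hD : D = (C₃*S₂ - C₂*S₃) * (C₁^2*S₄ - C₄^2*S₁)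
            - (C₁*S₄ - C₄*S₁) * (C₃^2*S₂ - C₂^2*S₃))
    (ha₁ : a₁ = 2*S₄*(C₃*S₂ - C₂*S₃) / D)
    (ha₂ : a₂ = 2*S₃*(C₁*S₄ - C₄*S₁) / D)
    (ha₃ : a₃ = -2*S₂*(C₁*S₄ - C₄*S₁) / D)
    (ha₄ : a₄ = -2*S₁*(C₃*S₂ - C₂*S₃) / D) :
    0 < D ∧ 0 < a₁ ∧ 0 < a₂ ∧ 0 < a₃ ∧ 0 < a₄ := by
  have hP : C₃*S₂ - C₂*S₃ < 0 := by nlinarith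
  have hQ : C₁*S₄ - C₄*S₁ < 0 := by nlinarith
  have hA : C₁^2*S₄ - C₄^2*S₁ < 0 := by nlinarith [sq_nonneg C₁, sq_nonneg C₄, mul_pos (pow_pos h₄C 2) h₁S, mul_neg_of_pos_of_neg (pow_pos h₁C 2) h₄S]
  have hB : 0 < C₃^2*S₂ - C₂^2*S₃ := by nlinarith [mul_pos (pow_pos (neg_pos.mpr h₃C) 2) h₂S, mul_neg_of_pos_of_neg (pow_pos (neg_pos.mpr h₂C) 2) h₃S, sq_abs C₃, sq_abs C₂]
  have hDpos : 0 < D := by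
    rw [hD]
    have t1 := mul_pos_of_neg_of_neg hP hA
    have t2 := mul_neg_of_neg_of_pos hQ hB
    linarith
  refine ⟨hDpos, ?_, ?_, ?_, ?_⟩
  · rw [ha₁]
    exact div_pos (by nlinarith [mul_pos_of_neg_of_neg h₄S hP]) hDpos
  · rw [ha₂]
    exact div_pos (by nlinarith [mul_pos_of_neg_of_neg h₃S hQ]) hDpos
  · rw [ha₃]
    have h := mul_neg_of_pos_of_neg h₂S hQ
    exact div_pos (by linarith [mul_neg_of_pos_of_neg h₂S hQ]) hDpos
  · rw [ha₄]
    exact div_pos (by linarith [mul_neg_of_pos_of_neg h₁S hP]) hDpos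
end

section
/- Let ν ∈ ℝ² be a unit vector and ν⊥ its rotation by π/2, let x₀ ∈ ℝ², and let C_j, S_j (j = 1,…,4) be real numbers with D = (C₃S₂−C₂S₃)(C₁²S₄−C₄²S₁) − (C₁S₄−C₄S₁)(C₃²S₂−C₂²S₃) ≠ 0, with coefficients a₁ = 2S₄(C₃S₂−C₂S₃)/D, a₂ = 2S₃(C₁S₄−C₄S₁)/D, a₃ = −2S₂(C₁S₄−C₄S₁)/D, a₄ = −2S₁(C₃S₂−C₂S₃)/D, and set x_j = x₀ + C_j ν + S_j ν⊥. Then for every function of the form u(x) = p + q·(x−x₀) + (γ/2)((x−x₀)·ν)² with p, γ ∈ ℝ and q ∈ ℝ², the generalised finite difference approximation is exact: Σ_{j=1}^{4} a_j (u(x_j) − u(x₀)) = γ, and γ equals the second directional derivative of u in the direction ν. -/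
/-!
In the frame `(ν, ν⊥)` centred at `x₀`, the point `x₀ + C ν + S ν⊥` has `(x - x₀)·ν = C`, so
`u(x_j) - u(x₀) = C_j (q·ν) + S_j (q·ν⊥) + (γ/2) C_j²`. The weights `a_j` satisfy the moment
conditions `Σ a_j C_j = 0`, `Σ a_j S_j = 0`, `Σ a_j C_j² = 2`, which annihilate the linear part
and return `γ` from the quadratic one. Along the line `t ↦ x₀ + t ν` the function `u` is the
parabola `(γ/2) t² + (q·ν) t + p`, whose second derivative is `γ`.
-/

section Moments

variable {C₁ S₁ C₂ S₂ C₃ S₃ C₄ S₄ D a₁ a₂ a₃ a₄ : ℝ}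

lemma gfd_weights_sum_mul_C
    (ha₁ : a₁ = 2*S₄*(C₃*S₂ - C₂*S₃) / D) (ha₂ : a₂ = 2*S₃*(C₁*S₄ - C₄*S₁) / D)
    (ha₃ : a₃ = -2*S₂*(C₁*S₄ - C₄*S₁) / D) (ha₄ : a₄ = -2*S₁*(C₃*S₂ - C₂*S₃) / D) :
    a₁*C₁ + a₂*C₂ + a₃*C₃ + a₄*C₄ = 0 := by
  subst ha₁ ha₂ ha₃ ha₄
  ring

lemma gfd_weights_sum_mul_S
    (ha₁ : a₁ = 2*S₄*(C₃*S₂ - C₂*S₃) / D) (ha₂ : a₂ = 2*S₃*(C₁*S₄ - C₄*S₁) / D)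
    (ha₃ : a₃ = -2*S₂*(C₁*S₄ - C₄*S₁) / D) (ha₄ : a₄ = -2*S₁*(C₃*S₂ - C₂*S₃) / D) :
    a₁*S₁ + a₂*S₂ + a₃*S₃ + a₄*S₄ = 0 := by
  subst ha₁ ha₂ ha₃ ha₄
  ring

lemma gfd_weights_sum_mul_C_sq
    (hD : D = (C₃*S₂ - C₂*S₃) * (C₁^2*S₄ - C₄^2*S₁) - (C₁*S₄ - C₄*S₁) * (C₃^2*S₂ - C₂^2*S₃))
    (hD0 : D ≠ 0)
    (ha₁ : a₁ = 2*S₄*(C₃*S₂ - C₂*S₃) / D) (ha₂ : a₂ = 2*S₃*(C₁*S₄ - C₄*S₁) / D)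
    (ha₃ : a₃ = -2*S₂*(C₁*S₄ - C₄*S₁) / D) (ha₄ : a₄ = -2*S₁*(C₃*S₂ - C₂*S₃) / D) :
    a₁*C₁^2 + a₂*C₂^2 + a₃*C₃^2 + a₄*C₄^2 = 2 := by
  subst ha₁ ha₂ ha₃ ha₄
  field_simp
  linear_combination (-1) * hD

lemma gfd_weights_sum_quadratic
    (hD : D = (C₃*S₂ - C₂*S₃) * (C₁^2*S₄ - C₄^2*S₁) - (C₁*S₄ - C₄*S₁) * (C₃^2*S₂ - C₂^2*S₃))
    (hD0 : D ≠ 0)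
    (ha₁ : a₁ = 2*S₄*(C₃*S₂ - C₂*S₃) / D) (ha₂ : a₂ = 2*S₃*(C₁*S₄ - C₄*S₁) / D)
    (ha₃ : a₃ = -2*S₂*(C₁*S₄ - C₄*S₁) / D) (ha₄ : a₄ = -2*S₁*(C₃*S₂ - C₂*S₃) / D)
    (Q R γ : ℝ) :
    a₁ * (C₁*Q + S₁*R + γ/2*C₁^2) + a₂ * (C₂*Q + S₂*R + γ/2*C₂^2)
      + a₃ * (C₃*Q + S₃*R + γ/2*C₃^2) + a₄ * (C₄*Q + S₄*R + γ/2*C₄^2) = γ := by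
  linear_combination Q * gfd_weights_sum_mul_C ha₁ ha₂ ha₃ ha₄
    + R * gfd_weights_sum_mul_S ha₁ ha₂ ha₃ ha₄
    + γ/2 * gfd_weights_sum_mul_C_sq hD hD0 ha₁ ha₂ ha₃ ha₄

end Moments

lemma frame_point_dot_dir {ν : ℝ × ℝ} (hν : ν.1^2 + ν.2^2 = 1) (C S : ℝ) :
    (C • ν + S • ((-ν.2, ν.1) : ℝ × ℝ)).1 * ν.1 + (C • ν + S • ((-ν.2, ν.1) : ℝ × ℝ)).2 * ν.2
      = C := by
  simp only [Prod.fst_add, Prod.snd_add, Prod.smul_fst, Prod.smul_snd, smul_eq_mul]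
  linear_combination C * hν

lemma quadratic_sub_at_frame_point {ν x₀ q : ℝ × ℝ} {p γ : ℝ} {u : ℝ × ℝ → ℝ}
    (hν : ν.1^2 + ν.2^2 = 1)
    (hu : ∀ x : ℝ × ℝ, u x = p + (q.1 * (x - x₀).1 + q.2 * (x - x₀).2)
            + (γ/2) * ((x - x₀).1 * ν.1 + (x - x₀).2 * ν.2)^2)
    (C S : ℝ) :
    u (x₀ + C • ν + S • (-ν.2, ν.1)) - u x₀
      = C * (q.1 * ν.1 + q.2 * ν.2) + S * (-q.1 * ν.2 + q.2 * ν.1) + γ/2 * C^2 := by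
  have hdisp : x₀ + C • ν + S • (-ν.2, ν.1) - x₀ = C • ν + S • (-ν.2, ν.1) := by
    rw [add_assoc, add_sub_cancel_left]
  rw [hu, hu, hdisp, frame_point_dot_dir hν]
  simp only [sub_self, Prod.fst_zero, Prod.snd_zero, Prod.fst_add, Prod.snd_add,
    Prod.smul_fst, Prod.smul_snd, smul_eq_mul]
  ring

lemma deriv_deriv_quadratic (a b c x : ℝ) :
    deriv (deriv fun t : ℝ => a * t^2 + b * t + c) x = 2 * a := by
  have hderiv : deriv (fun t : ℝ => a * t^2 + b * t + c) = fun t => 2 * a * t + b := by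
    funext t
    exact ((((hasDerivAt_pow 2 t).const_mul a).add ((hasDerivAt_id t).const_mul b)).add_const c
      |>.deriv.trans (by ring))
  rw [hderiv]
  exact (((hasDerivAt_id x).const_mul (2 * a)).add_const b).deriv.trans (mul_one _)

/-- The generalised finite difference approximation is exact on
quadratic functions of the form `u(x) = p + q·(x−x₀) + (γ/2)((x−x₀)·ν)²`,
and recovers `γ`, the second directional derivative of `u` in direction `ν`. -/
theorem gfd_exact_on_quadratics
    (ν : ℝ × ℝ) (hν : ν.1^2 + ν.2^2 = 1)
    (νperp : ℝ × ℝ) (hνperp : νperp = (-ν.2, ν.1))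
    (x₀ : ℝ × ℝ)
    (C₁ S₁ C₂ S₂ C₃ S₃ C₄ S₄ D a₁ a₂ a₃ a₄ : ℝ)
    (hD : D = (C₃*S₂ - C₂*S₃) * (C₁^2*S₄ - C₄^2*S₁)
            - (C₁*S₄ - C₄*S₁) * (C₃^2*S₂ - C₂^2*S₃))
    (hD0 : D ≠ 0)
    (ha₁ : a₁ = 2*S₄*(C₃*S₂ - C₂*S₃) / D)
    (ha₂ : a₂ = 2*S₃*(C₁*S₄ - C₄*S₁) / D)
    (ha₃ : a₃ = -2*S₂*(C₁*S₄ - C₄*S₁) / D)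
    (ha₄ : a₄ = -2*S₁*(C₃*S₂ - C₂*S₃) / D)
    (x₁ x₂ x₃ x₄ : ℝ × ℝ)
    (hx₁ : x₁ = x₀ + C₁ • ν + S₁ • νperp)
    (hx₂ : x₂ = x₀ + C₂ • ν + S₂ • νperp)
    (hx₃ : x₃ = x₀ + C₃ • ν + S₃ • νperp)
    (hx₄ : x₄ = x₀ + C₄ • ν + S₄ • νperp)
    (p γ : ℝ) (q : ℝ × ℝ) (u : ℝ × ℝ → ℝ)
    (hu : ∀ x : ℝ × ℝ, u x = p + (q.1 * (x - x₀).1 + q.2 * (x - x₀).2)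
            + (γ/2) * ((x - x₀).1 * ν.1 + (x - x₀).2 * ν.2)^2) :
    a₁ * (u x₁ - u x₀) + a₂ * (u x₂ - u x₀)
      + a₃ * (u x₃ - u x₀) + a₄ * (u x₄ - u x₀) = γ ∧
    deriv (deriv (fun t : ℝ => u (x₀ + t • ν))) 0 = γ := by
  subst hνperp hx₁ hx₂ hx₃ hx₄
  have hdiff := quadratic_sub_at_frame_point hν hu
  refine ⟨?_, ?_⟩
  · simp only [hdiff]
    exact gfd_weights_sum_quadratic hD hD0 ha₁ ha₂ ha₃ ha₄ _ _ γ
  · have hline : (fun t : ℝ => u (x₀ + t • ν))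
        = fun t => γ/2 * t^2 + (q.1 * ν.1 + q.2 * ν.2) * t + p := by
      funext t
      have h := hdiff t 0
      rw [zero_smul, add_zero, hu x₀, sub_self] at h
      simp only [Prod.fst_zero, Prod.snd_zero] at h
      linear_combination h
    rw [hline, deriv_deriv_quadratic]
    ring
end

section
/- Let ν ∈ ℝ² be a unit vector and ν⊥ its rotation by π/2, let x₀ ∈ ℝ², let C_j, S_j, a_j (j = 1,…,4) be real numbers satisfying the identities Σ a_j C_j = 0, Σ a_j S_j = 0, Σ a_j C_j² = 2, and set x_j = x₀ + C_j ν + S_j ν⊥ and r_j = √(C_j² + S_j²). Let u: ℝ² → ℝ be three times continuously differentiable, and suppose the operator norm of the third Fréchet derivative of u is bounded by M₃ on the closed ball of radius max_j r_j centred at x₀. Then the approximation error of the generalised finite difference scheme satisfies |Σ_{j=1}^{4} a_j (u(x_j) − u(x₀)) − u_{νν}(x₀)| ≤ |u_{νν⊥}(x₀)|·|Σ_{j=1}^{4} a_j C_j S_j| + (1/2)|u_{ν⊥ν⊥}(x₀)|·Σ_{j=1}^{4} |a_j| S_j² + (M₃/6)·Σ_{j=1}^{4} |a_j| r_j³, where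 u_{νν}, u_{νν⊥}, u_{ν⊥ν⊥} denote the second directional derivatives of u in the indicated pairs of directions. -/
/-!
Expand `u` to second order at `x₀` along each `hⱼ = Cⱼ ν + Sⱼ ν⊥`; bounding the integral form of
the remainder gives `M₃ ‖hⱼ‖³ / 6 ≤ M₃ rⱼ³ / 6`. By symmetry of `D²u(x₀)`,
`D²u(x₀)[hⱼ, hⱼ] = Cⱼ² u_νν + 2 Cⱼ Sⱼ u_νν⊥ + Sⱼ² u_ν⊥ν⊥`. In the weighted sum of the expansions the
moment conditions cancel the first-order terms and turn the `Cⱼ²` terms into exactly `u_νν`; what is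
left is the mixed term, the `ν⊥ν⊥` term and the remainders.
-/

open Set Finset Nat

theorem norm_sub_taylor_le_of_norm_iteratedFDeriv_le {E F : Type*} [NormedAddCommGroup E]
    [NormedSpace ℝ E] [NormedAddCommGroup F] [NormedSpace ℝ F] [CompleteSpace F] {f : E → F}
    {x y : E} {n : ℕ} {M : ℝ}
    (hf : ∀ t ∈ Icc (0 : ℝ) 1, ContDiffAt ℝ (n + 1) f (x + t • y))
    (hM : ∀ t ∈ Icc (0 : ℝ) 1, ‖iteratedFDeriv ℝ (n + 1) f (x + t • y)‖ ≤ M) :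
    ‖f (x + y) - ∑ k ∈ range (n + 1), (k ! : ℝ)⁻¹ • iteratedFDeriv ℝ k f x (fun _ ↦ y)‖
      ≤ M * ‖y‖ ^ (n + 1) / (n + 1)! := by
  rw [map_add_eq_sum_add_integral_iteratedFDeriv hf, add_sub_cancel_left, norm_smul]
  have hintegrand : ∀ t ∈ Ioc (0 : ℝ) 1,
      ‖(1 - t) ^ n • iteratedFDeriv ℝ (n + 1) f (x + t • y) (fun _ ↦ y)‖
        ≤ (1 - t) ^ n * (M * ‖y‖ ^ (n + 1)) := by
    intro t ht
    have h1t : 0 ≤ 1 - t := sub_nonneg.2 ht.2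
    rw [norm_smul, Real.norm_of_nonneg (pow_nonneg h1t n)]
    gcongr
    exact (ContinuousMultilinearMap.le_opNorm_mul_pow_of_le _ (pi_norm_const_le y)).trans
      (by gcongr; exact hM t (Ioc_subset_Icc_self ht))
  have hintegral : ∫ t in (0 : ℝ)..1, (1 - t) ^ n * (M * ‖y‖ ^ (n + 1))
      = M * ‖y‖ ^ (n + 1) / (n + 1) := by
    rw [intervalIntegral.integral_mul_const, intervalIntegral.integral_comp_sub_left
      (fun t ↦ t ^ n), integral_pow]
    norm_num
    ring
  calc ‖((n ! : ℝ)⁻¹)‖ * ‖∫ t in (0 : ℝ)..1,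
          (1 - t) ^ n • iteratedFDeriv ℝ (n + 1) f (x + t • y) (fun _ ↦ y)‖
      ≤ (n ! : ℝ)⁻¹ * (M * ‖y‖ ^ (n + 1) / (n + 1)) := by
        rw [Real.norm_of_nonneg (by positivity), ← hintegral]
        gcongr
        exact intervalIntegral.norm_integral_le_of_norm_le zero_le_one
          (Filter.Eventually.of_forall hintegrand)
          ((by fun_prop : Continuous _).intervalIntegrable _ _)
    _ = M * ‖y‖ ^ (n + 1) / (n + 1)! := by
        rw [Nat.factorial_succ]; push_cast; field_simp

section Stencil

variable {E : Type*} [NormedAddCommGroup E] [NormedSpace ℝ E] {u : E → ℝ} {x : E}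

theorem abs_sub_taylor_two_le (hu : ContDiff ℝ 3 u) {h : E} {M : ℝ}
    (hM : ∀ y ∈ Metric.closedBall x ‖h‖, ‖iteratedFDeriv ℝ 3 u y‖ ≤ M) :
    |u (x + h) - u x - fderiv ℝ u x h - iteratedFDeriv ℝ 2 u x (fun _ ↦ h) / 2|
      ≤ M / 6 * ‖h‖ ^ 3 := by
  have hseg : ∀ t ∈ Icc (0 : ℝ) 1, x + t • h ∈ Metric.closedBall x ‖h‖ := fun t ht ↦
    (convex_closedBall x ‖h‖).add_smul_mem (Metric.mem_closedBall_self (norm_nonneg h))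
      (by simp) ht
  have := norm_sub_taylor_le_of_norm_iteratedFDeriv_le (n := 2)
    (fun t _ ↦ hu.contDiffAt) (fun t ht ↦ hM _ (hseg t ht))
  norm_num [sum_range_succ] at this
  convert this using 2 <;> ring

theorem iteratedFDeriv_two_smul_add_smul (hu : ContDiffAt ℝ 2 u x) (C S : ℝ) (v w : E) :
    iteratedFDeriv ℝ 2 u x (fun _ ↦ C • v + S • w)
      = C ^ 2 * iteratedFDeriv ℝ 2 u x ![v, v] + 2 * C * S * iteratedFDeriv ℝ 2 u x ![v, w]
        + S ^ 2 * iteratedFDeriv ℝ 2 u x ![w, w] := by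
  have hsymm := hu.isSymmSndFDerivAt (by simp) w v
  simp only [iteratedFDeriv_two_apply, Matrix.cons_val_zero, Matrix.cons_val_one, map_add,
    map_smul, add_apply, smul_apply, smul_eq_mul, hsymm]
  ring

theorem abs_stencil_sub_iteratedFDeriv_two_le {ι : Type*} (s : Finset ι) (a C S : ι → ℝ)
    (hu : ContDiff ℝ 3 u) (ν p : E) {R M : ℝ}
    (hC : ∑ i ∈ s, a i * C i = 0) (hS : ∑ i ∈ s, a i * S i = 0)
    (hCC : ∑ i ∈ s, a i * C i ^ 2 = 2) (hR : ∀ i ∈ s, ‖C i • ν + S i • p‖ ≤ R)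
    (hM : ∀ y ∈ Metric.closedBall x R, ‖iteratedFDeriv ℝ 3 u y‖ ≤ M) :
    |∑ i ∈ s, a i * (u (x + C i • ν + S i • p) - u x) - iteratedFDeriv ℝ 2 u x ![ν, ν]|
      ≤ |iteratedFDeriv ℝ 2 u x ![ν, p]| * |∑ i ∈ s, a i * C i * S i|
        + 1 / 2 * |iteratedFDeriv ℝ 2 u x ![p, p]| * ∑ i ∈ s, |a i| * S i ^ 2
        + M / 6 * ∑ i ∈ s, |a i| * ‖C i • ν + S i • p‖ ^ 3 := by
  set B := iteratedFDeriv ℝ 2 u x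
  set e : ι → ℝ := fun i ↦ u (x + C i • ν + S i • p) - u x
    - (C i * fderiv ℝ u x ν + S i * fderiv ℝ u x p)
    - (C i ^ 2 * B ![ν, ν] + 2 * C i * S i * B ![ν, p] + S i ^ 2 * B ![p, p]) / 2
  have he : ∀ i ∈ s, |e i| ≤ M / 6 * ‖C i • ν + S i • p‖ ^ 3 := by
    intro i hi
    have := abs_sub_taylor_two_le hu (h := C i • ν + S i • p)
      (fun y hy ↦ hM y (Metric.closedBall_subset_closedBall (hR i hi) hy))
    rwa [iteratedFDeriv_two_smul_add_smul (hu.contDiffAt.of_le (by norm_num)), map_add,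
      map_smul, map_smul, smul_eq_mul, smul_eq_mul, ← add_assoc] at this
  have hsplit : ∑ i ∈ s, a i * (u (x + C i • ν + S i • p) - u x) - B ![ν, ν]
      = B ![ν, p] * ∑ i ∈ s, a i * C i * S i + 1 / 2 * B ![p, p] * ∑ i ∈ s, a i * S i ^ 2
        + ∑ i ∈ s, a i * e i := by
    have hnode : ∀ i, a i * (u (x + C i • ν + S i • p) - u x)
        = fderiv ℝ u x ν * (a i * C i) + fderiv ℝ u x p * (a i * S i)
          + B ![ν, ν] / 2 * (a i * C i ^ 2) + B ![ν, p] * (a i * C i * S i)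
          + B ![p, p] / 2 * (a i * S i ^ 2) + a i * e i := by
      intro i; simp only [e]; ring
    simp only [hnode, sum_add_distrib, ← mul_sum, hC, hS, hCC]
    ring
  have hSS : |∑ i ∈ s, a i * S i ^ 2| ≤ ∑ i ∈ s, |a i| * S i ^ 2 :=
    (abs_sum_le_sum_abs _ _).trans_eq (by simp [abs_mul])
  have hE : |∑ i ∈ s, a i * e i| ≤ M / 6 * ∑ i ∈ s, |a i| * ‖C i • ν + S i • p‖ ^ 3 := by
    rw [mul_sum]
    refine (abs_sum_le_sum_abs _ _).trans (sum_le_sum fun i hi ↦ ?_)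
    rw [abs_mul]
    exact (mul_le_mul_of_nonneg_left (he i hi) (abs_nonneg _)).trans_eq (by ring)
  rw [hsplit]
  refine (abs_add_three _ _ _).trans ?_
  rw [abs_mul, abs_mul, abs_mul, abs_of_pos (by norm_num : (0 : ℝ) < 1 / 2)]
  gcongr

end Stencil

/-- `ℝ × ℝ` carries the sup norm, which is only dominated by the Euclidean length `√(C² + S²)`. -/
theorem norm_smul_add_smul_rotate_le_sqrt (ν : ℝ × ℝ) (hν : ν.1 ^ 2 + ν.2 ^ 2 = 1) (C S : ℝ) :
    ‖C • ν + S • ((-ν.2, ν.1) : ℝ × ℝ)‖ ≤ √(C ^ 2 + S ^ 2) := by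
  have hsum : (C * ν.1 - S * ν.2) ^ 2 + (C * ν.2 + S * ν.1) ^ 2 = C ^ 2 + S ^ 2 := by
    linear_combination (C ^ 2 + S ^ 2) * hν
  simp only [Prod.norm_def, Prod.fst_add, Prod.snd_add, Prod.smul_fst, Prod.smul_snd, smul_eq_mul,
    Real.norm_eq_abs]
  refine max_le (Real.abs_le_sqrt ?_) (Real.abs_le_sqrt ?_) <;>
    nlinarith [sq_nonneg (C * ν.1 - S * ν.2), sq_nonneg (C * ν.2 + S * ν.1)]

/-- Truncation error estimate for the generalised finite
difference approximation of the second directional derivative `u_{νν}(x₀)`. -/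
theorem gfd_truncation_error
    (ν : ℝ × ℝ) (hν : ν.1^2 + ν.2^2 = 1)
    (νperp : ℝ × ℝ) (hνperp : νperp = (-ν.2, ν.1))
    (x₀ : ℝ × ℝ)
    (C₁ S₁ C₂ S₂ C₃ S₃ C₄ S₄ a₁ a₂ a₃ a₄ : ℝ)
    (hsum1 : a₁*C₁ + a₂*C₂ + a₃*C₃ + a₄*C₄ = 0)
    (hsum2 : a₁*S₁ + a₂*S₂ + a₃*S₃ + a₄*S₄ = 0)
    (hsum3 : a₁*C₁^2 + a₂*C₂^2 + a₃*C₃^2 + a₄*C₄^2 = 2)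
    (x₁ x₂ x₃ x₄ : ℝ × ℝ)
    (hx₁ : x₁ = x₀ + C₁ • ν + S₁ • νperp)
    (hx₂ : x₂ = x₀ + C₂ • ν + S₂ • νperp)
    (hx₃ : x₃ = x₀ + C₃ • ν + S₃ • νperp)
    (hx₄ : x₄ = x₀ + C₄ • ν + S₄ • νperp)
    (r₁ r₂ r₃ r₄ : ℝ)
    (hr₁ : r₁ = Real.sqrt (C₁^2 + S₁^2))
    (hr₂ : r₂ = Real.sqrt (C₂^2 + S₂^2))
    (hr₃ : r₃ = Real.sqrt (C₃^2 + S₃^2))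
    (hr₄ : r₄ = Real.sqrt (C₄^2 + S₄^2))
    (u : ℝ × ℝ → ℝ) (hu : ContDiff ℝ 3 u)
    (M₃ : ℝ)
    (hM₃ : ∀ x ∈ Metric.closedBall x₀ (max (max r₁ r₂) (max r₃ r₄)),
      ‖iteratedFDeriv ℝ 3 u x‖ ≤ M₃) :
    |a₁ * (u x₁ - u x₀) + a₂ * (u x₂ - u x₀)
        + a₃ * (u x₃ - u x₀) + a₄ * (u x₄ - u x₀)
      - iteratedFDeriv ℝ 2 u x₀ ![ν, ν]|
    ≤ |iteratedFDeriv ℝ 2 u x₀ ![ν, νperp]|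
        * |a₁*C₁*S₁ + a₂*C₂*S₂ + a₃*C₃*S₃ + a₄*C₄*S₄|
      + (1/2) * |iteratedFDeriv ℝ 2 u x₀ ![νperp, νperp]|
        * (|a₁| *S₁^2 + |a₂| *S₂^2 + |a₃| *S₃^2 + |a₄| *S₄^2)
      + (M₃/6) * (|a₁| *r₁^3 + |a₂| *r₂^3 + |a₃| *r₃^3 + |a₄| *r₄^3) := by
  subst hνperp hx₁ hx₂ hx₃ hx₄ hr₁ hr₂ hr₃ hr₄
  have hM₃0 : 0 ≤ M₃ :=
    (norm_nonneg _).trans (hM₃ x₀ (Metric.mem_closedBall_self (by positivity)))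
  have hnorm := norm_smul_add_smul_rotate_le_sqrt ν hν
  have key := abs_stencil_sub_iteratedFDeriv_two_le univ ![a₁, a₂, a₃, a₄] ![C₁, C₂, C₃, C₄]
    ![S₁, S₂, S₃, S₄] hu ν (-ν.2, ν.1)
    (by simpa [Fin.sum_univ_four] using hsum1) (by simpa [Fin.sum_univ_four] using hsum2)
    (by simpa [Fin.sum_univ_four] using hsum3)
    (fun i _ ↦ by fin_cases i <;> refine (hnorm _ _).trans ?_ <;> simp) hM₃
  simp only [Fin.sum_univ_four, Matrix.cons_val] at key
  refine key.trans ?_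
  gcongr <;> apply hnorm
end

section
/- Let u: ℝ² → ℝ be four times continuously differentiable and let (x,y) ∈ ℝ². Then the higher-order dangling-node approximation of u_xx is second-order accurate: the quantity [u(x−h, y+h/2) + u(x+h, y+h/2) + u(x+h, y−h/2) + u(x−h, y−h/2) − 2u(x, y+h/2) − 2u(x, y−h/2)]/(2h²) − u_xx(x,y) is O(h²) as h → 0⁺; that is, there exist constants C > 0 and h₀ > 0 such that its absolute value is at most C h² for all 0 < h < h₀. -/
/-!
Along a line `t ↦ p + t • v`, Taylor's theorem to fourth order gives
`u (p + h • v) + u (p - h • v) - 2 * u p = h ^ 2 * D²u(p)(v, v) + O(h ^ 4)`: the odd-order terms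
cancel. With `e = (1, 0)` and `w = (0, 1/2)` the stencil is the combination of these central
second differences in the directions `w - e`, `w + e` and `w` with weights `1, 1, -2`, and by the
parallelogram law for the bilinear form `D²u(p)` their second-order terms add up to
`2 * h ^ 2 * D²u(p)(e, e) = 2 * h ^ 2 * u_xx(p)`.
-/

open Filter Topology Asymptotics Set

theorem Asymptotics.IsBigO.exists_pos_bound_nhdsGT {E F : Type*} [Norm E]
    [SeminormedAddCommGroup F] {f : ℝ → E} {g : ℝ → F} {a : ℝ} (hfg : f =O[𝓝[>] a] g) :
    ∃ C > 0, ∃ b > a, ∀ x ∈ Ioo a b, ‖f x‖ ≤ C * ‖g x‖ := by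
  obtain ⟨C, hC, hCfg⟩ := hfg.exists_pos
  obtain ⟨b, hb, hsub⟩ := mem_nhdsGT_iff_exists_Ioo_subset.1 hCfg.bound
  exact ⟨C, hC, b, hb, hsub⟩

theorem ContinuousLinearMap.map_add_add_map_sub {𝕜 E F : Type*} [NontriviallyNormedField 𝕜]
    [NormedAddCommGroup E] [NormedSpace 𝕜 E] [NormedAddCommGroup F] [NormedSpace 𝕜 F]
    (B : E →L[𝕜] E →L[𝕜] F) (a b : E) :
    B (a + b) (a + b) + B (a - b) (a - b) = 2 • B a a + 2 • B b b := by
  simp only [map_add, map_sub, add_apply, sub_apply]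
  abel

theorem abs_div_two_mul_sq_sub_le {N Q C h : ℝ} (hh : h ≠ 0)
    (hN : |N - h ^ 2 * (2 * Q)| ≤ C * h ^ 4) : |N / (2 * h ^ 2) - Q| ≤ C / 2 * h ^ 2 := by
  have hpos : 0 < 2 * h ^ 2 := by positivity
  rw [div_sub' hpos.ne', abs_div, abs_of_pos hpos, div_le_iff₀ hpos]
  calc |N - 2 * h ^ 2 * Q| = |N - h ^ 2 * (2 * Q)| := by ring_nf
    _ ≤ C * h ^ 4 := hN
    _ = C / 2 * h ^ 2 * (2 * h ^ 2) := by ring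

section CentralDifference

variable {E : Type*} [NormedAddCommGroup E] [NormedSpace ℝ E]

theorem iteratedDeriv_comp_add_smul {F : Type*} [NormedAddCommGroup F] [NormedSpace ℝ F]
    {u : E → F} {n : WithTop ℕ∞} (hu : ContDiff ℝ n u) (p v : E) (t : ℝ) {i : ℕ} (hi : i ≤ n) :
    iteratedDeriv i (fun s => u (p + s • v)) t = iteratedFDeriv ℝ i u (p + t • v) fun _ => v := by
  have hline : (fun s : ℝ => u (p + s • v)) =
      (fun q => u (p + q)) ∘ ContinuousLinearMap.smulRight (1 : ℝ →L[ℝ] ℝ) v := rfl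
  have hshift : ContDiff ℝ n fun q => u (p + q) := hu.comp (contDiff_const.add contDiff_id)
  rw [iteratedDeriv_eq_iteratedFDeriv, hline,
    ContinuousLinearMap.iteratedFDeriv_comp_right _ hshift _ hi]
  simp [iteratedFDeriv_comp_add_left]

def secondCentralDiff (u : E → ℝ) (p v : E) (h : ℝ) : ℝ :=
  u (p + h • v) + u (p - h • v) - 2 * u p

theorem ContDiff.isBigO_secondCentralDiff_sub_iteratedDeriv {g : ℝ → ℝ} (hg : ContDiff ℝ 4 g) :
    (fun h => secondCentralDiff g 0 1 h - h ^ 2 * iteratedDeriv 2 g 0) =O[𝓝 0]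
      fun h => h ^ 4 := by
  have taylor := (taylor_isLittleO_univ (x₀ := 0) hg).isBigO
  have taylor_neg := taylor.comp_tendsto (continuous_neg.tendsto' (0 : ℝ) 0 neg_zero)
  simp only [Function.comp_def, sub_zero, Even.neg_pow (by decide : Even 4)] at taylor taylor_neg
  -- the fourth-order Taylor terms at `h` and `-h` add up to `g⁽⁴⁾(0) h⁴ / 12`
  refine ((taylor.add taylor_neg).add
    (isBigO_const_mul_self (iteratedDeriv 4 g 0 / 12) _ _)).congr_left fun h => ?_
  simp only [secondCentralDiff, taylor_within_apply, Finset.sum_range_succ, Finset.sum_range_zero,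
    iteratedDerivWithin_univ, iteratedDeriv_zero, smul_eq_mul]
  norm_num [Nat.factorial]
  ring

theorem ContDiff.isBigO_secondCentralDiff_sub_fderiv_fderiv {u : E → ℝ} (hu : ContDiff ℝ 4 u)
    (p v : E) :
    (fun h => secondCentralDiff u p v h - h ^ 2 * fderiv ℝ (fderiv ℝ u) p v v) =O[𝓝 0]
      fun h => h ^ 4 := by
  have hline : ContDiff ℝ 4 fun s : ℝ => u (p + s • v) := hu.comp (by fun_prop)
  have hderiv := iteratedDeriv_comp_add_smul hu p v 0 (i := 2) (by norm_num)
  rw [zero_smul, add_zero, iteratedFDeriv_two_apply] at hderiv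
  refine hline.isBigO_secondCentralDiff_sub_iteratedDeriv.congr_left fun h => ?_
  simp [secondCentralDiff, hderiv, sub_eq_add_neg]

end CentralDifference

/-- The dangling-node approximation of `u_xx` is second-order
accurate for `C⁴` functions. -/
theorem dangling_node_uxx_second_order
    (u : ℝ × ℝ → ℝ) (hu : ContDiff ℝ 4 u) (x y : ℝ) :
    ∃ C > (0:ℝ), ∃ h₀ > (0:ℝ), ∀ h : ℝ, 0 < h → h < h₀ →
      |(u (x - h, y + h/2) + u (x + h, y + h/2) + u (x + h, y - h/2)
          + u (x - h, y - h/2) - 2 * u (x, y + h/2) - 2 * u (x, y - h/2))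
            / (2 * h^2)
        - iteratedFDeriv ℝ 2 u (x, y) ![(1, 0), (1, 0)]| ≤ C * h^2 := by
  set B := fderiv ℝ (fderiv ℝ u) (x, y)
  set e : ℝ × ℝ := (1, 0)
  set w : ℝ × ℝ := (0, 1 / 2)
  have stencil : ∀ h : ℝ, u (x - h, y + h/2) + u (x + h, y + h/2) + u (x + h, y - h/2)
      + u (x - h, y - h/2) - 2 * u (x, y + h/2) - 2 * u (x, y - h/2) =
      secondCentralDiff u (x, y) (w - e) h + secondCentralDiff u (x, y) (w + e) h
        - 2 * secondCentralDiff u (x, y) w h := by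
    intro h
    simp only [secondCentralDiff, e, w, Prod.smul_mk, Prod.mk_add_mk, Prod.mk_sub_mk, smul_eq_mul]
    ring_nf
  have parallelogram : B (w - e) (w - e) + B (w + e) (w + e) - 2 * B w w = 2 * B e e := by
    have := B.map_add_add_map_sub w e
    simp only [nsmul_eq_mul, Nat.cast_ofNat] at this
    linarith
  have stencil_sub : (fun h => secondCentralDiff u (x, y) (w - e) h
      + secondCentralDiff u (x, y) (w + e) h - 2 * secondCentralDiff u (x, y) w h
      - h ^ 2 * (2 * B e e)) =O[𝓝 0] fun h => h ^ 4 := by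
    refine (((hu.isBigO_secondCentralDiff_sub_fderiv_fderiv (x, y) (w - e)).add
      (hu.isBigO_secondCentralDiff_sub_fderiv_fderiv (x, y) (w + e))).sub
      ((hu.isBigO_secondCentralDiff_sub_fderiv_fderiv (x, y) w).const_mul_left 2)).congr_left
        fun h => ?_
    rw [← parallelogram]
    ring
  obtain ⟨C, hC, h₀, hh₀, hbound⟩ := (stencil_sub.mono nhdsWithin_le_nhds).exists_pos_bound_nhdsGT
  refine ⟨C / 2, by positivity, h₀, hh₀, fun h hpos hlt => ?_⟩
  have hQ : iteratedFDeriv ℝ 2 u (x, y) ![(1, 0), (1, 0)] = B e e := iteratedFDeriv_two_apply ..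
  rw [stencil, hQ]
  refine abs_div_two_mul_sq_sub_le hpos.ne' ?_
  simpa [abs_of_pos hpos] using hbound h ⟨hpos, hlt⟩
end

section
/- Let u: ℝ² → ℝ be four times continuously differentiable and let (x,y) ∈ ℝ². Then the higher-order dangling-node approximation of the mixed derivative u_xy is second-order accurate: the quantity [u(x+h, y+h/2) + u(x−h, y−h/2) − u(x−h, y+h/2) − u(x+h, y−h/2)]/(2h²) − u_xy(x,y) is O(h²) as h → 0⁺; that is, there exist constants C > 0 and h₀ > 0 such that its absolute value is at most C h² for all 0 < h < h₀. -/
/-!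
Write `p = (x, y)` and `v± = (±h, h/2)`. The stencil is `(S v₊ - S v₋) / (2h²)` with
`S v = u (p + v) + u (p - v)`. Along the line `t ↦ p + t • v` the odd Taylor terms cancel in `S v`,
so the Lagrange remainder of order four gives `S v = 2 u p + D²u p (v, v) + O(‖v‖⁴)`. By symmetry
of `D²u p`, the quadratic parts differ by exactly `D²u p (v₊, v₊) - D²u p (v₋, v₋) = 2h² u_xy`.
-/

open Set Nat Metric

theorem iteratedDeriv_comp_line {𝕜 E F : Type*} [NontriviallyNormedField 𝕜]
    [NormedAddCommGroup E] [NormedSpace 𝕜 E] [NormedAddCommGroup F] [NormedSpace 𝕜 F]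
    {n : WithTop ℕ∞} {u : E → F} (hu : ContDiff 𝕜 n u) (p v : E) {m : ℕ} (hm : m ≤ n) (t : 𝕜) :
    iteratedDeriv m (fun s : 𝕜 => u (p + s • v)) t =
      iteratedFDeriv 𝕜 m u (p + t • v) (fun _ => v) := by
  let L : 𝕜 →L[𝕜] E := (ContinuousLinearMap.id 𝕜 𝕜).smulRight v
  have hshift : ContDiff 𝕜 n (fun w => u (p + w)) := hu.comp (contDiff_const.add contDiff_id)
  rw [iteratedDeriv_eq_iteratedFDeriv,
    show (fun s : 𝕜 => u (p + s • v)) = (fun w => u (p + w)) ∘ L from rfl,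
    L.iteratedFDeriv_comp_right hshift t hm, ContinuousMultilinearMap.compContinuousLinearMap_apply,
    iteratedFDeriv_comp_add_left]
  simp [L]

theorem iteratedFDeriv_two_smul_add_sub {E F : Type*} [NormedAddCommGroup E] [NormedSpace ℝ E]
    [NormedAddCommGroup F] [NormedSpace ℝ F] {u : E → F} {p : E} (hu : ContDiffAt ℝ 2 u p)
    (a b : E) (s t : ℝ) :
    iteratedFDeriv ℝ 2 u p (fun _ => s • a + t • b)
        - iteratedFDeriv ℝ 2 u p (fun _ => (-s) • a + t • b)
      = (4 * s * t) • iteratedFDeriv ℝ 2 u p ![a, b] := by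
  have hsymm := (hu.isSymmSndFDerivAt (by simp)).eq b a
  simp only [iteratedFDeriv_two_apply, map_add, map_smul, add_apply, smul_apply,
    Matrix.cons_val_zero, Matrix.cons_val_one, hsymm]
  module

theorem exists_taylor_lagrange_iteratedDeriv {f : ℝ → ℝ} {n : ℕ} (hf : ContDiff ℝ (n + 1) f)
    {x₀ x : ℝ} (hx : x₀ ≠ x) :
    ∃ ξ ∈ uIoo x₀ x, f x = ∑ k ∈ Finset.range (n + 1), iteratedDeriv k f x₀ * (x - x₀) ^ k / k !
      + iteratedDeriv (n + 1) f ξ * (x - x₀) ^ (n + 1) / (n + 1)! := by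
  obtain ⟨ξ, hξ, hrem⟩ := taylor_mean_remainder_lagrange_iteratedDeriv hx hf.contDiffOn
  refine ⟨ξ, hξ, ?_⟩
  have htaylor : taylorWithinEval f n (uIcc x₀ x) x₀ x
      = ∑ k ∈ Finset.range (n + 1), iteratedDeriv k f x₀ * (x - x₀) ^ k / k ! := by
    rw [taylor_within_apply]
    refine Finset.sum_congr rfl fun k hk => ?_
    have hfk : ContDiff ℝ k f := hf.of_le (by exact_mod_cast (Finset.mem_range.mp hk).le)
    rw [iteratedDerivWithin_eq_iteratedDeriv (uniqueDiffOn_uIcc hx) hfk.contDiffAt left_mem_uIcc,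
      smul_eq_mul]
    ring
  rw [← hrem, htaylor, add_sub_cancel]

theorem abs_central_second_difference_sub_iteratedDeriv_le {f : ℝ → ℝ} (hf : ContDiff ℝ 4 f)
    {M : ℝ} (hM : ∀ t ∈ Icc (-1 : ℝ) 1, |iteratedDeriv 4 f t| ≤ M) :
    |f 1 + f (-1) - 2 * f 0 - iteratedDeriv 2 f 0| ≤ M / 12 := by
  obtain ⟨ξ, hξ, hf₁⟩ := exists_taylor_lagrange_iteratedDeriv (n := 3) hf (x₀ := 0) (x := 1)
    (by norm_num)
  obtain ⟨η, hη, hf₂⟩ := exists_taylor_lagrange_iteratedDeriv (n := 3) hf (x₀ := 0) (x := -1)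
    (by norm_num)
  rw [uIoo_of_le zero_le_one] at hξ
  rw [uIoo_of_ge (by norm_num)] at hη
  have h₁ := hM ξ ⟨by linarith [hξ.1], by linarith [hξ.2]⟩
  have h₂ := hM η ⟨by linarith [hη.1], by linarith [hη.2]⟩
  have hsum : f 1 + f (-1) - 2 * f 0 - iteratedDeriv 2 f 0
      = (iteratedDeriv 4 f ξ + iteratedDeriv 4 f η) / 24 := by
    rw [hf₁, hf₂]
    simp only [Finset.sum_range_succ, Finset.sum_range_zero, iteratedDeriv_zero, Nat.factorial]
    push_cast
    ring
  rw [hsum, abs_le]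
  constructor <;> linarith [abs_le.mp h₁, abs_le.mp h₂]

theorem abs_central_second_difference_sub_iteratedFDeriv_le {E : Type*} [NormedAddCommGroup E]
    [NormedSpace ℝ E] {u : E → ℝ} (hu : ContDiff ℝ 4 u) {p v : E} {r M : ℝ} (hv : ‖v‖ ≤ r)
    (hM : ∀ z ∈ closedBall p r, ‖iteratedFDeriv ℝ 4 u z‖ ≤ M) :
    |u (p + v) + u (p - v) - 2 * u p - iteratedFDeriv ℝ 2 u p (fun _ => v)| ≤ M * r ^ 4 / 12 := by
  have hM0 : 0 ≤ M := (norm_nonneg _).trans (hM p (mem_closedBall_self ((norm_nonneg v).trans hv)))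
  have hbound : ∀ t ∈ Icc (-1 : ℝ) 1,
      |iteratedDeriv 4 (fun s : ℝ => u (p + s • v)) t| ≤ M * r ^ 4 := by
    intro t ht
    have hz : p + t • v ∈ closedBall p r := by
      rw [mem_closedBall, dist_self_add_left, norm_smul]
      exact (mul_le_of_le_one_left (norm_nonneg v) (abs_le.mpr ht)).trans hv
    rw [iteratedDeriv_comp_line hu p v (by norm_num), ← Real.norm_eq_abs]
    calc ‖iteratedFDeriv ℝ 4 u (p + t • v) (fun _ => v)‖
        ≤ ‖iteratedFDeriv ℝ 4 u (p + t • v)‖ * ∏ _i : Fin 4, ‖v‖ :=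
          ContinuousMultilinearMap.le_opNorm _ _
      _ ≤ M * r ^ 4 := by
          rw [Finset.prod_const, Finset.card_fin]
          gcongr
          exact hM _ hz
  have hline : ContDiff ℝ 4 (fun s : ℝ => u (p + s • v)) := by fun_prop
  have := abs_central_second_difference_sub_iteratedDeriv_le hline hbound
  rw [iteratedDeriv_comp_line hu p v (by norm_num)] at this
  simpa [← sub_eq_add_neg] using this

theorem abs_dangling_node_stencil_sub_le {u : ℝ × ℝ → ℝ} (hu : ContDiff ℝ 4 u) {x y h M : ℝ}
    (hpos : 0 < h) (hM : ∀ z ∈ closedBall (x, y) h, ‖iteratedFDeriv ℝ 4 u z‖ ≤ M) :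
    |(u (x + h, y + h / 2) + u (x - h, y - h / 2) - u (x - h, y + h / 2)
        - u (x + h, y - h / 2)) / (2 * h ^ 2)
      - iteratedFDeriv ℝ 2 u (x, y) ![(1, 0), (0, 1)]| ≤ M / 12 * h ^ 2 := by
  have hnorm : ∀ s : ℝ, |s| = h → ‖((s, h / 2) : ℝ × ℝ)‖ ≤ h := fun s hs =>
    norm_prod_le_iff.mpr ⟨by rw [Real.norm_eq_abs, hs], by
      rw [Real.norm_eq_abs, abs_of_pos (by positivity)]; linarith⟩
  have e₁ := abs_central_second_difference_sub_iteratedFDeriv_le hu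
    (hnorm h (abs_of_pos hpos)) hM
  have e₂ := abs_central_second_difference_sub_iteratedFDeriv_le hu
    (hnorm (-h) (by rw [abs_neg, abs_of_pos hpos])) hM
  have hpol := iteratedFDeriv_two_smul_add_sub ((hu.of_le (by norm_num)).contDiffAt (x := (x, y)))
    ((1, 0) : ℝ × ℝ) (0, 1) h (h / 2)
  simp only [Prod.smul_mk, smul_eq_mul, mul_one, mul_zero, Prod.mk_add_mk, add_zero, zero_add]
    at hpol
  simp only [Prod.mk_add_mk, Prod.mk_sub_mk, ← sub_eq_add_neg, sub_neg_eq_add] at e₁ e₂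
  set B₁ := iteratedFDeriv ℝ 2 u (x, y) fun _ => (h, h / 2)
  set B₂ := iteratedFDeriv ℝ 2 u (x, y) fun _ => (-h, h / 2)
  have h2 : 0 < 2 * h ^ 2 := by positivity
  calc _ = |((u (x + h, y + h / 2) + u (x - h, y - h / 2) - 2 * u (x, y) - B₁)
        - (u (x - h, y + h / 2) + u (x + h, y - h / 2) - 2 * u (x, y) - B₂)) / (2 * h ^ 2)| := by
        congr 1
        rw [eq_div_iff h2.ne', sub_mul, div_mul_cancel₀ _ h2.ne']
        linear_combination hpol
    _ ≤ (M * h ^ 4 / 12 + M * h ^ 4 / 12) / (2 * h ^ 2) := by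
        rw [abs_div, abs_of_pos h2]
        gcongr
        exact (abs_sub _ _).trans (add_le_add e₁ e₂)
    _ = M / 12 * h ^ 2 := by
        field_simp
        ring

/-- The dangling-node approximation of the mixed derivative
`u_xy` is second-order accurate for `C⁴` functions. -/
theorem dangling_node_uxy_second_order
    (u : ℝ × ℝ → ℝ) (hu : ContDiff ℝ 4 u) (x y : ℝ) :
    ∃ C > (0:ℝ), ∃ h₀ > (0:ℝ), ∀ h : ℝ, 0 < h → h < h₀ →
      |(u (x + h, y + h/2) + u (x - h, y - h/2) - u (x - h, y + h/2)
          - u (x + h, y - h/2)) / (2 * h^2)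
        - iteratedFDeriv ℝ 2 u (x, y) ![(1, 0), (0, 1)]| ≤ C * h^2 := by
  obtain ⟨M, hM⟩ := (isCompact_closedBall (x, y) 1).exists_bound_of_continuousOn
    (hu.continuous_iteratedFDeriv (m := 4) le_rfl).continuousOn
  have hM0 : 0 ≤ M := (norm_nonneg _).trans (hM _ (mem_closedBall_self zero_le_one))
  refine ⟨M / 12 + 1, by positivity, 1, one_pos, fun h hpos hlt => ?_⟩
  calc _ ≤ M / 12 * h ^ 2 := abs_dangling_node_stencil_sub_le hu hpos
          fun z hz => hM z (closedBall_subset_closedBall hlt.le hz)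
    _ ≤ (M / 12 + 1) * h ^ 2 := by gcongr; linarith
end

section
/- Let M be a real symmetric 2×2 matrix, and for θ ∈ ℝ let e_θ = (cos θ, sin θ). Then the minimum over θ ∈ ℝ of the product (e_θᵀ M e_θ)·(e_{θ+π/2}ᵀ M e_{θ+π/2}) exists and equals det M. -/
open Matrix

theorem key_identity (a b d s c : ℝ) (hpyth : s ^ 2 + c ^ 2 = 1) :
    (a * c ^ 2 + 2 * b * s * c + d * s ^ 2) *
      (a * s ^ 2 - 2 * b * s * c + d * c ^ 2) =
    (a * d - b * b) + ((a - d) * s * c - b * (c ^ 2 - s ^ 2)) ^ 2 := by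
  linear_combination ((a * d - b * b) * (s ^ 2 + c ^ 2 + 1)) * hpyth

/-- For a real symmetric 2×2 matrix `M`, the minimum over `θ`
of the product of the quadratic forms in the orthogonal directions `e_θ` and
`e_{θ+π/2}` exists and equals `det M`. -/
theorem min_product_quadratic_forms_eq_det
    (M : Matrix (Fin 2) (Fin 2) ℝ) (hM : M.IsSymm) :
    IsLeast
      (Set.range fun θ : ℝ =>
        (![Real.cos θ, Real.sin θ] ⬝ᵥ M.mulVec ![Real.cos θ, Real.sin θ]) *
        (![Real.cos (θ + Real.pi/2), Real.sin (θ + Real.pi/2)] ⬝ᵥ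
          M.mulVec ![Real.cos (θ + Real.pi/2), Real.sin (θ + Real.pi/2)]))
      M.det := by
  set a := M 0 0 with ha
  set b := M 0 1 with hb
  set d := M 1 1 with hd
  have hb' : M 1 0 = b := by
    have := congrFun (congrFun hM 1) 0
    simpa [Matrix.transpose_apply, ← hb] using this.symm
  have hdet : M.det = a * d - b * b := by
    rw [Matrix.det_fin_two, hb']
  have hfun : ∀ θ : ℝ,
      ((![Real.cos θ, Real.sin θ] ⬝ᵥ M.mulVec ![Real.cos θ, Real.sin θ]) *
        (![Real.cos (θ + Real.pi/2), Real.sin (θ + Real.pi/2)] ⬝ᵥ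
          M.mulVec ![Real.cos (θ + Real.pi/2), Real.sin (θ + Real.pi/2)])) =
      (a * Real.cos θ ^ 2 + 2 * b * Real.sin θ * Real.cos θ + d * Real.sin θ ^ 2) *
      (a * Real.sin θ ^ 2 - 2 * b * Real.sin θ * Real.cos θ + d * Real.cos θ ^ 2) := by
    intro θ
    simp [Matrix.mulVec, dotProduct, Fin.sum_univ_two, hb',
      Real.cos_add_pi_div_two, Real.sin_add_pi_div_two]
    ring
  constructor
  · set g : ℝ → ℝ := fun θ =>
      (a - d) * Real.sin θ * Real.cos θ - b * (Real.cos θ ^ 2 - Real.sin θ ^ 2) with hg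
    have hcont : ContinuousOn g (Set.uIcc 0 (Real.pi / 2)) := by fun_prop
    have h0 : g 0 = -b := by simp [hg]
    have h1 : g (Real.pi / 2) = b := by simp [hg]
    have hmem : (0 : ℝ) ∈ Set.uIcc (g 0) (g (Real.pi / 2)) := by
      rw [h0, h1]
      rcases le_total b 0 with h | h
      · exact Set.mem_uIcc.2 (Or.inr ⟨h, by linarith⟩)
      · exact Set.mem_uIcc.2 (Or.inl ⟨by linarith, h⟩)
    obtain ⟨θ, _, hθ⟩ := intermediate_value_uIcc hcont hmem
    refine ⟨θ, ?_⟩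
    have hθ' : (a - d) * Real.sin θ * Real.cos θ - b * (Real.cos θ ^ 2 - Real.sin θ ^ 2) = 0 := hθ
    have hpyth := Real.sin_sq_add_cos_sq θ
    show ((![Real.cos θ, Real.sin θ] ⬝ᵥ M.mulVec ![Real.cos θ, Real.sin θ]) *
        (![Real.cos (θ + Real.pi/2), Real.sin (θ + Real.pi/2)] ⬝ᵥ
          M.mulVec ![Real.cos (θ + Real.pi/2), Real.sin (θ + Real.pi/2)])) = M.det
    rw [hfun θ, hdet, key_identity a b d _ _ hpyth, hθ']
    ring
  · rintro x ⟨θ, rfl⟩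
    dsimp only
    have hpyth := Real.sin_sq_add_cos_sq θ
    rw [hfun θ, hdet, key_identity a b d _ _ hpyth]
    nlinarith [sq_nonneg ((a - d) * Real.sin θ * Real.cos θ - b * (Real.cos θ ^ 2 - Real.sin θ ^ 2))]
end
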